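/- arXiv:1208.6108 — 2 statements merged into one kernel-verified Lean document; each statement's English description precedes it below -/
import Mathlib

section
/- Let α ≥ 1 and β ≥ 1 be integers, let G = (G₁,G₂) ∈ ℂ[X,Y]² satisfy det J_G(X,Y) = c·X^{β−α−1} identically for some nonzero constant c ∈ ℂ (in particular β ≥ α+1), let H ∈ ℂ[U,V] be irreducible with zero set {(u,v) : H(u,v) = 0} = {G(0,y) : y ∈ ℂ}, and let γ ≥ 1 be an integer and S ∈ ℂ[X,Y] with S(0,Y) ≢ 0 and H(G(X,Y)) = X^{γ}·S(X,Y). If γ ≥ 2, then β − α − 1 > 0. Moreover, if S(0,y) ≠ 0 for every y ∈ ℂ and the curve {H = 0} has at least one singular point, then γ ≥ 2 and β − α − 1 > 0. -/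
open MvPolynomial Filter

abbrev PolyPair := MvPolynomial (Fin 2) ℂ × MvPolynomial (Fin 2) ℂ

noncomputable def eval2 (p : MvPolynomial (Fin 2) ℂ) (x y : ℂ) : ℂ :=
  MvPolynomial.eval ![x, y] p

noncomputable def jacDet (P Q : MvPolynomial (Fin 2) ℂ) : MvPolynomial (Fin 2) ℂ :=
  pderiv 0 P * pderiv 1 Q - pderiv 1 P * pderiv 0 Q

noncomputable def polyMap (F : PolyPair) (p : ℂ × ℂ) : ℂ × ℂ :=
  (eval2 F.1 p.1 p.2, eval2 F.2 p.1 p.2)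

/-- `F` is a Keller mapping: its Jacobian determinant is a nonzero constant. -/
def IsKeller (F : PolyPair) : Prop :=
  ∃ c : ℂ, c ≠ 0 ∧ jacDet F.1 F.2 = MvPolynomial.C c

/-- `(u₀,v₀)` is a singular point of the plane curve `{H = 0}`. -/
def IsSingularPoint (H : MvPolynomial (Fin 2) ℂ) (p : ℂ × ℂ) : Prop :=
  eval2 H p.1 p.2 = 0 ∧ eval2 (pderiv 0 H) p.1 p.2 = 0 ∧ eval2 (pderiv 1 H) p.1 p.2 = 0

/-- `G` is the `R`-dual of `F`, where `R(x,y) = (x^{-α}, x^β y + x^{-α} φ(x))`. -/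
def IsRDual (F G : PolyPair) (α β : ℕ) (φ : Polynomial ℂ) : Prop :=
  ∀ x : ℂ, x ≠ 0 → ∀ y : ℂ,
    polyMap G (x, y) = polyMap F ((x ^ α)⁻¹, x ^ β * y + (x ^ α)⁻¹ * Polynomial.eval x φ)

/-- `p` is an asymptotic value of `F` : a limit of `F` along a curve tending to infinity. -/
def IsAsympValue (F : PolyPair) (p : ℂ × ℂ) : Prop :=
  ∃ γ : ℝ → ℂ × ℂ, Continuous γ ∧ Tendsto (fun t => ‖γ t‖) atTop atTop ∧
    Tendsto (fun t => polyMap F (γ t)) atTop (nhds p)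

/-- `F` is a polynomial automorphism of `ℂ²`. -/
def IsPolyAuto (F : PolyPair) : Prop :=
  ∃ Finv : PolyPair, (∀ p, polyMap F (polyMap Finv p) = p) ∧
    (∀ p, polyMap Finv (polyMap F p) = p)

/-!
Differentiating `H ∘ G = X^γ S` gives `(∇H ∘ G) · J_G = ∇(X^γ S)`. If `γ ≥ 2`, the right-hand
side vanishes on `{X = 0}`; if moreover `β - α - 1 = 0`, then `J_G` is invertible there, so `∇H`
vanishes at every point `G(0, y)`, that is, at every point of `{H = 0}`. By the Nullstellensatz
`H` then divides its partial derivatives, which forces them to vanish, so `H` would be constant.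
Conversely, at a singular point `G(0, y₀)` of `{H = 0}` the chain rule gives
`∂ₓ(X^γ S)(0, y₀) = 0`, which for `γ = 1` reads `S(0, y₀) = 0`.
-/

namespace MvPolynomial

theorem pderiv_aeval {R σ τ : Type*} [CommSemiring R] [Fintype τ] (g : τ → MvPolynomial σ R)
    (H : MvPolynomial τ R) (i : σ) :
    pderiv i (aeval g H) = ∑ j, aeval g (pderiv j H) * pderiv i (g j) := by
  classical
  induction H using MvPolynomial.induction_on with
  | C a => simp
  | add p q hp hq => simp only [map_add, hp, hq, add_mul, Finset.sum_add_distrib]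
  | mul_X p j hp =>
    simp only [map_mul, map_add, aeval_X, pderiv_mul, hp, pderiv_X, Pi.single_apply, mul_ite,
      mul_one, mul_zero, apply_ite (aeval g), map_zero, add_mul, ite_mul, zero_mul,
      Finset.sum_add_distrib, Finset.sum_ite_eq, Finset.mem_univ, if_true, Finset.sum_mul]
    simp only [mul_right_comm _ (g j)]

variable {R σ : Type*}

theorem degreeOf_pderiv_lt [CommSemiring R] {f : MvPolynomial σ R} {i : σ}
    (h : pderiv i f ≠ 0) : degreeOf i (pderiv i f) < degreeOf i f := by
  have key : ∀ m ∈ (pderiv i f).support, m i < degreeOf i f := fun m hm => by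
    have hcoeff : coeff (m + Finsupp.single i 1) f ≠ 0 := by
      intro h0
      rw [mem_support_iff, coeff_pderiv, h0, zero_mul] at hm
      exact hm rfl
    simpa using monomial_le_degreeOf i (mem_support_iff.mpr hcoeff)
  obtain ⟨m, hm⟩ := ne_zero_iff.mp h
  exact (degreeOf_lt_iff ((Nat.zero_le _).trans_lt (key m (mem_support_iff.mpr hm)))).mpr key

theorem pderiv_eq_zero_of_dvd [CommSemiring R] [NoZeroDivisors R] {f : MvPolynomial σ R} {i : σ}
    (hdvd : f ∣ pderiv i f) : pderiv i f = 0 := by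
  by_contra hne
  obtain ⟨k, hk⟩ := hdvd
  have hf : f ≠ 0 := by rintro rfl; simp at hne
  have hk0 : k ≠ 0 := by rintro rfl; exact hne (by rw [hk, mul_zero])
  have := degreeOf_pderiv_lt hne
  rw [hk, degreeOf_mul_eq hf hk0] at this
  omega

theorem eq_C_of_forall_pderiv_eq_zero [CommSemiring R] [NoZeroDivisors R] [CharZero R]
    {f : MvPolynomial σ R} (h : ∀ i, pderiv i f = 0) : f = C (coeff 0 f) := by
  classical
  ext m
  rw [coeff_C]
  split_ifs with hm
  · rw [hm]
  obtain ⟨i, hi⟩ : ∃ i, m i ≠ 0 := by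
    by_contra! hm'
    exact hm (Finsupp.ext fun j => (hm' j).symm)
  have hsplit : m - Finsupp.single i 1 + Finsupp.single i 1 = m := by
    ext j
    by_cases hj : i = j
    · subst hj; simp; omega
    · simp [hj]
  have := coeff_pderiv (i := i) f (m - Finsupp.single i 1)
  rw [h i, hsplit, coeff_zero] at this
  exact (mul_eq_zero.mp this.symm).resolve_right (Nat.cast_add_one_ne_zero _)

theorem dvd_of_forall_eval_eq_zero {K : Type*} [Field K] [IsAlgClosed K] [Finite σ]
    {H f : MvPolynomial σ K} (hH : Prime H) (h : ∀ x, eval x H = 0 → eval x f = 0) : H ∣ f := by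
  have : (Ideal.span {H}).IsPrime := (Ideal.span_singleton_prime hH.ne_zero).mpr hH
  rw [← Ideal.mem_span_singleton, ← IsPrime.vanishingIdeal_zeroLocus (K := K) (Ideal.span {H}),
    mem_vanishingIdeal_iff]
  intro x hx
  exact h x (hx H (Ideal.mem_span_singleton_self H))

theorem exists_eval_eq_zero_and_pderiv_ne_zero {K : Type*} [Field K] [IsAlgClosed K] [CharZero K]
    [Finite σ] {H : MvPolynomial σ K} (hH : Irreducible H) :
    ∃ x, eval x H = 0 ∧ ∃ i, eval x (pderiv i H) ≠ 0 := by
  by_contra! hsing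
  have hconst := eq_C_of_forall_pderiv_eq_zero fun i =>
    pderiv_eq_zero_of_dvd (dvd_of_forall_eval_eq_zero hH.prime fun x hx => hsing x hx i)
  rcases eq_or_ne (coeff 0 H) 0 with h0 | h0
  · exact hH.ne_zero (by rw [hconst, h0, map_zero])
  · exact hH.not_isUnit (hconst ▸ (isUnit_iff_ne_zero.mpr h0).map C)

end MvPolynomial

theorem eval2_aeval (G : PolyPair) (P : MvPolynomial (Fin 2) ℂ) (x y : ℂ) :
    eval2 (aeval ![G.1, G.2] P) x y = eval2 P (eval2 G.1 x y) (eval2 G.2 x y) := by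
  show aeval ![x, y] (bind₁ ![G.1, G.2] P) = aeval _ P
  rw [aeval_bind₁]
  exact congrArg (aeval · P) (funext fun i => by fin_cases i <;> rfl)

theorem eval2_pderiv_aeval (G : PolyPair) (H : MvPolynomial (Fin 2) ℂ) (i : Fin 2) (x y : ℂ) :
    eval2 (pderiv i (aeval ![G.1, G.2] H)) x y =
      eval2 (pderiv 0 H) (eval2 G.1 x y) (eval2 G.2 x y) * eval2 (pderiv i G.1) x y +
        eval2 (pderiv 1 H) (eval2 G.1 x y) (eval2 G.2 x y) * eval2 (pderiv i G.2) x y := by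
  have h := congrArg (eval ![x, y]) (pderiv_aeval ![G.1, G.2] H i)
  rw [Fin.sum_univ_two, map_add, map_mul, map_mul] at h
  rw [← eval2_aeval, ← eval2_aeval]
  exact h

theorem IsSingularPoint.comp {G : PolyPair} {H : MvPolynomial (Fin 2) ℂ} {x y : ℂ}
    (h : IsSingularPoint H (polyMap G (x, y))) : IsSingularPoint (aeval ![G.1, G.2] H) (x, y) := by
  obtain ⟨h0, h1, h2⟩ := h
  refine ⟨(eval2_aeval G H x y).trans h0, ?_, ?_⟩ <;>
    · rw [eval2_pderiv_aeval]
      simp only [polyMap] at h1 h2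
      simp [h1, h2]

theorem IsSingularPoint.of_comp {G : PolyPair} {H : MvPolynomial (Fin 2) ℂ} {x y : ℂ}
    (hJ : eval2 (jacDet G.1 G.2) x y ≠ 0) (h : IsSingularPoint (aeval ![G.1, G.2] H) (x, y)) :
    IsSingularPoint H (polyMap G (x, y)) := by
  obtain ⟨h0, h1, h2⟩ := h
  dsimp only at h0 h1 h2
  rw [eval2_aeval] at h0
  rw [eval2_pderiv_aeval] at h1 h2
  have hJ' : eval2 (jacDet G.1 G.2) x y = eval2 (pderiv 0 G.1) x y * eval2 (pderiv 1 G.2) x y -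
      eval2 (pderiv 1 G.1) x y * eval2 (pderiv 0 G.2) x y := by
    simp only [jacDet, eval2, map_sub, map_mul]
  -- Cramer's rule: multiply the system `(∇H ∘ G) · J_G = 0` by the adjugate of `J_G`.
  refine ⟨h0, (mul_eq_zero.mp ?_).resolve_right hJ, (mul_eq_zero.mp ?_).resolve_right hJ⟩
  · dsimp only [polyMap]
    rw [hJ']
    linear_combination eval2 (pderiv 1 G.2) x y * h1 - eval2 (pderiv 0 G.2) x y * h2
  · dsimp only [polyMap]
    rw [hJ']
    linear_combination eval2 (pderiv 0 G.1) x y * h2 - eval2 (pderiv 1 G.1) x y * h1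

theorem isSingularPoint_X_pow_mul_iff {γ : ℕ} (hγ : 1 ≤ γ) (S : MvPolynomial (Fin 2) ℂ) (y : ℂ) :
    IsSingularPoint (X 0 ^ γ * S) (0, y) ↔ 2 ≤ γ ∨ eval2 S 0 y = 0 := by
  have hγ0 : γ ≠ 0 := by omega
  have hγ2 : γ - 1 ≠ 0 ↔ 2 ≤ γ := by omega
  simp [IsSingularPoint, eval2, hγ0, hγ2, or_comm]

theorem exists_not_isSingularPoint {H : MvPolynomial (Fin 2) ℂ} (hH : Irreducible H) :
    ∃ p, eval2 H p.1 p.2 = 0 ∧ ¬ IsSingularPoint H p := by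
  obtain ⟨x, hx, i, hi⟩ := exists_eval_eq_zero_and_pderiv_ne_zero hH
  have hx' : ![x 0, x 1] = x := by ext j; fin_cases j <;> rfl
  refine ⟨(x 0, x 1), by simpa [eval2, hx'], fun ⟨_, h0, h1⟩ => hi ?_⟩
  fin_cases i
  · simpa [eval2, hx'] using h0
  · simpa [eval2, hx'] using h1

theorem gamma_ge_two_case_general (α β : ℕ)
    (G : PolyPair) (c : ℂ) (hc : c ≠ 0)
    (hdet : jacDet G.1 G.2 = MvPolynomial.C c * (X 0 : MvPolynomial (Fin 2) ℂ) ^ (β - α - 1))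
    (H : MvPolynomial (Fin 2) ℂ) (hH : Irreducible H)
    (hzero : {p : ℂ × ℂ | eval2 H p.1 p.2 = 0} = {p : ℂ × ℂ | ∃ y : ℂ, p = polyMap G (0, y)})
    (γ : ℕ) (hγ : 1 ≤ γ) (S : MvPolynomial (Fin 2) ℂ)
    (hfac : aeval ![G.1, G.2] H = (X 0 : MvPolynomial (Fin 2) ℂ) ^ γ * S) :
    (2 ≤ γ → 0 < β - α - 1) ∧
      ((∀ y : ℂ, eval2 S 0 y ≠ 0) → (∃ p : ℂ × ℂ, IsSingularPoint H p) →
        2 ≤ γ ∧ 0 < β - α - 1) := by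
  have on_curve : ∀ p : ℂ × ℂ, eval2 H p.1 p.2 = 0 → ∃ y, p = polyMap G (0, y) :=
    fun p hp => (Set.ext_iff.mp hzero p).mp hp
  have exponent_pos (hγ2 : 2 ≤ γ) : 0 < β - α - 1 := by
    by_contra! hexp
    obtain ⟨p, hp, hsmooth⟩ := exists_not_isSingularPoint hH
    obtain ⟨y, rfl⟩ := on_curve p hp
    refine hsmooth (IsSingularPoint.of_comp ?_ ?_)
    · simpa [hdet, Nat.le_zero.mp hexp, eval2] using hc
    · rw [hfac]
      exact (isSingularPoint_X_pow_mul_iff hγ S y).mpr (Or.inl hγ2)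
  refine ⟨exponent_pos, fun hS ⟨p, hp⟩ => ?_⟩
  obtain ⟨y, rfl⟩ := on_curve p hp.1
  have hγ2 : 2 ≤ γ :=
    ((isSingularPoint_X_pow_mul_iff hγ S y).mp (hfac ▸ hp.comp)).resolve_right (hS y)
  exact ⟨hγ2, exponent_pos hγ2⟩

/-- if `γ ≥ 2` then `β - α - 1 > 0`; and if the phantom curve misses
`{X = 0}` while `{H = 0}` has a singular point, then `γ ≥ 2` and `β - α - 1 > 0`. -/
theorem gamma_ge_two_case (α β : ℕ) (hα : 1 ≤ α) (hβ1 : 1 ≤ β)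
    (G : PolyPair) (c : ℂ) (hc : c ≠ 0)
    (hdet : jacDet G.1 G.2 = MvPolynomial.C c * (X 0 : MvPolynomial (Fin 2) ℂ) ^ (β - α - 1))
    (hβ : α + 1 ≤ β)
    (H : MvPolynomial (Fin 2) ℂ) (hH : Irreducible H)
    (hzero : {p : ℂ × ℂ | eval2 H p.1 p.2 = 0} = {p : ℂ × ℂ | ∃ y : ℂ, p = polyMap G (0, y)})
    (γ : ℕ) (hγ : 1 ≤ γ) (S : MvPolynomial (Fin 2) ℂ)
    (hS0 : ∃ y : ℂ, eval2 S 0 y ≠ 0)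
    (hfac : aeval ![G.1, G.2] H = (X 0 : MvPolynomial (Fin 2) ℂ) ^ γ * S) :
    (2 ≤ γ → 0 < β - α - 1) ∧
      ((∀ y : ℂ, eval2 S 0 y ≠ 0) → (∃ p : ℂ × ℂ, IsSingularPoint H p) →
        2 ≤ γ ∧ 0 < β - α - 1) :=
  gamma_ge_two_case_general α β G c hc hdet H hH hzero γ hγ S hfac
end

section
/- Let α ≥ 1 and β ≥ 0 be integers, φ ∈ ℂ[X], let F = (P,Q) ∈ ℂ[X,Y]² be a polynomial mapping with det J_F equal to a nonzero constant c ∈ ℂ, and let G ∈ ℂ[X,Y]² be the R-dual of F. Then necessarily β ≥ α + 1, and det J_G(x,y) = −c·α·x^{β−α−1} for all (x,y) ∈ ℂ². -/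
open MvPolynomial Filter

/-! Away from `x = 0`, `G = F ∘ R` with `R(x,y) = (u(x), a(x)y + b(x))` triangular, so the chain
rule gives `det J_G = (det J_F ∘ R) · u' · a = c · (-α x^{-α-1}) · x^β`. Since `det J_G` is a
polynomial it is continuous at `x = 0`, so `-cα x^{β-α-1}` must stay bounded there, which forces
`β ≥ α + 1`; the identity then extends to `x = 0` by density. -/

open scoped Topology

lemma hasFDerivAt_eval2 (p : MvPolynomial (Fin 2) ℂ) (q : ℂ × ℂ) :
    HasFDerivAt (fun r : ℂ × ℂ => eval2 p r.1 r.2)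
      (eval2 (pderiv 0 p) q.1 q.2 • ContinuousLinearMap.fst ℂ ℂ ℂ
        + eval2 (pderiv 1 p) q.1 q.2 • ContinuousLinearMap.snd ℂ ℂ ℂ) q := by
  induction p using MvPolynomial.induction_on with
  | C a =>
      simp only [eval2, eval_C]
      exact (hasFDerivAt_const a q).congr_fderiv (by ext <;> simp)
  | add p r hp hr =>
      simp only [eval2, map_add]
      exact (hp.fun_add hr).congr_fderiv (by ext <;> simp [eval2])
  | mul_X p n hp =>
      have hX : HasFDerivAt (fun r : ℂ × ℂ => eval2 (X n) r.1 r.2)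
          (eval2 (pderiv 0 (X n)) q.1 q.2 • ContinuousLinearMap.fst ℂ ℂ ℂ
            + eval2 (pderiv 1 (X n)) q.1 q.2 • ContinuousLinearMap.snd ℂ ℂ ℂ) q := by
        fin_cases n
        · simp only [eval2, eval_X]
          exact (hasFDerivAt_fst (𝕜 := ℂ) (p := q)).congr_fderiv (by ext <;> simp)
        · simp only [eval2, eval_X]
          exact (hasFDerivAt_snd (𝕜 := ℂ) (p := q)).congr_fderiv (by ext <;> simp)
      simp only [eval2, map_mul]
      exact (hp.fun_mul hX).congr_fderiv (by ext <;> simp [eval2])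

lemma HasDerivAt.eval2 (p : MvPolynomial (Fin 2) ℂ) {u v : ℂ → ℂ} {u' v' x : ℂ}
    (hu : HasDerivAt u u' x) (hv : HasDerivAt v v' x) :
    HasDerivAt (fun t => eval2 p (u t) (v t))
      (eval2 (pderiv 0 p) (u x) (v x) * u' + eval2 (pderiv 1 p) (u x) (v x) * v') x := by
  have h := (hasFDerivAt_eval2 p (u x, v x)).comp_hasDerivAt x (hu.prodMk hv)
  simp only [add_apply, smul_apply, ContinuousLinearMap.coe_fst', ContinuousLinearMap.coe_snd',
    smul_eq_mul] at h
  exact h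

lemma hasDerivAt_eval2_left (p : MvPolynomial (Fin 2) ℂ) (x y : ℂ) :
    HasDerivAt (fun t => eval2 p t y) (eval2 (pderiv 0 p) x y) x := by
  simpa using (hasDerivAt_id x).eval2 p (hasDerivAt_const x y)

lemma hasDerivAt_eval2_right (p : MvPolynomial (Fin 2) ℂ) (x y : ℂ) :
    HasDerivAt (fun s => eval2 p x s) (eval2 (pderiv 1 p) x y) y := by
  simpa using (hasDerivAt_const y x).eval2 p (hasDerivAt_id y)

lemma continuous_eval2_left (p : MvPolynomial (Fin 2) ℂ) (y : ℂ) :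
    Continuous fun x => eval2 p x y :=
  continuous_iff_continuousAt.2 fun x => (hasDerivAt_eval2_left p x y).continuousAt

lemma eval2_jacDet (P Q : MvPolynomial (Fin 2) ℂ) (x y : ℂ) :
    eval2 (jacDet P Q) x y = eval2 (pderiv 0 P) x y * eval2 (pderiv 1 Q) x y
      - eval2 (pderiv 1 P) x y * eval2 (pderiv 0 Q) x y := by
  simp [jacDet, eval2]

section Triangular

variable {F G : PolyPair} {f g : MvPolynomial (Fin 2) ℂ} {u a b : ℂ → ℂ} {u' a' b' x y : ℂ}

lemma eval2_pderiv_zero_of_eventuallyEq_comp (hu : HasDerivAt u u' x) (ha : HasDerivAt a a' x)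
    (hb : HasDerivAt b b' x)
    (h : ∀ᶠ t in 𝓝 x, eval2 g t y = eval2 f (u t) (a t * y + b t)) :
    eval2 (pderiv 0 g) x y = eval2 (pderiv 0 f) (u x) (a x * y + b x) * u'
      + eval2 (pderiv 1 f) (u x) (a x * y + b x) * (a' * y + b') :=
  (hasDerivAt_eval2_left g x y).unique
    ((hu.eval2 f ((ha.mul_const y).fun_add hb)).congr_of_eventuallyEq h)

lemma eval2_pderiv_one_of_eq_comp {U A B : ℂ}
    (h : ∀ s, eval2 g x s = eval2 f U (A * s + B)) :
    eval2 (pderiv 1 g) x y = eval2 (pderiv 1 f) U (A * y + B) * A := by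
  have hline : HasDerivAt (fun s => A * s + B) A y := by
    simpa using ((hasDerivAt_id y).const_mul A).add_const B
  refine (hasDerivAt_eval2_right g x y).unique ?_
  simpa [funext h] using (hasDerivAt_const y U).eval2 f hline

lemma eval2_jacDet_of_eventuallyEq_comp (hu : HasDerivAt u u' x) (ha : HasDerivAt a a' x)
    (hb : HasDerivAt b b' x)
    (h : ∀ᶠ t in 𝓝 x, ∀ s, polyMap G (t, s) = polyMap F (u t, a t * s + b t)) :
    eval2 (jacDet G.1 G.2) x y = eval2 (jacDet F.1 F.2) (u x) (a x * y + b x) * (u' * a x) := by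
  have h₁ := fun s => congrArg Prod.fst (h.self_of_nhds s)
  have h₂ := fun s => congrArg Prod.snd (h.self_of_nhds s)
  have hG₁x := eval2_pderiv_zero_of_eventuallyEq_comp (y := y) hu ha hb
    (h.mono fun t ht => congrArg Prod.fst (ht y))
  have hG₂x := eval2_pderiv_zero_of_eventuallyEq_comp (y := y) hu ha hb
    (h.mono fun t ht => congrArg Prod.snd (ht y))
  simp only [polyMap] at h₁ h₂ hG₁x hG₂x
  rw [eval2_jacDet, eval2_jacDet, hG₁x, hG₂x, eval2_pderiv_one_of_eq_comp h₁, eval2_pderiv_one_of_eq_comp h₂]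
  ring

end Triangular

lemma le_and_eq_pow_of_mul_pow_eq {f : ℂ → ℂ} (hf : Continuous f) {K : ℂ} (hK : K ≠ 0)
    {m n : ℕ} (h : ∀ x ≠ 0, f x * x ^ m = K * x ^ n) : m ≤ n ∧ ∀ x, f x = K * x ^ (n - m) := by
  have hdense : Dense ({0}ᶜ : Set ℂ) := dense_compl_singleton 0
  have hle : m ≤ n := by
    by_contra! hlt
    have hconst : (fun x => f x * x ^ (m - n)) = fun _ => K := by
      refine (hf.fun_mul (continuous_pow _)).ext_on hdense continuous_const fun x hx => ?_
      refine mul_right_cancel₀ (pow_ne_zero n hx) ?_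
      rw [mul_assoc, pow_sub_mul_pow x hlt.le]
      exact h x hx
    have h0 := congrFun hconst 0
    simp only [zero_pow (Nat.sub_ne_zero_of_lt hlt), mul_zero] at h0
    exact hK h0.symm
  refine ⟨hle, congrFun (hf.ext_on hdense (continuous_const.mul (continuous_pow _)) fun x hx => ?_)⟩
  refine mul_right_cancel₀ (pow_ne_zero m (hx : x ≠ 0)) ?_
  rw [h x hx, mul_assoc, pow_sub_mul_pow x hle]

lemma IsRDual.eval2_jacDet_mul_pow {F G : PolyPair} {α β : ℕ} {φ : Polynomial ℂ} {c : ℂ}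
    (hG : IsRDual F G α β φ) (hdet : jacDet F.1 F.2 = C c) {x : ℂ} (hx : x ≠ 0) (y : ℂ) :
    eval2 (jacDet G.1 G.2) x y * x ^ (α + 1) = -c * α * x ^ β := by
  have hu := (hasDerivAt_pow α x).inv (pow_ne_zero α hx)
  rw [eval2_jacDet_of_eventuallyEq_comp hu (hasDerivAt_pow β x)
      (hu.mul (Polynomial.hasDerivAt φ x))
      (eventually_ne_nhds hx |>.mono fun t ht s => hG t ht s), hdet]
  simp only [eval2, eval_C]
  rcases α with _ | α
  · simp
  · rw [Nat.add_sub_cancel]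
    field_simp
    ring

theorem jacobian_of_dual_general (α β : ℕ) (hα : 1 ≤ α)
    (φ : Polynomial ℂ)
    (F : PolyPair) (c : ℂ) (hc : c ≠ 0)
    (hdet : jacDet F.1 F.2 = MvPolynomial.C c)
    (G : PolyPair) (hG : IsRDual F G α β φ) :
    α + 1 ≤ β ∧
      ∀ x y : ℂ, eval2 (jacDet G.1 G.2) x y = -c * (α : ℂ) * x ^ (β - α - 1) := by
  have hK : -c * (α : ℂ) ≠ 0 := mul_ne_zero (neg_ne_zero.2 hc) (Nat.cast_ne_zero.2 (by omega))
  have hJ (y : ℂ) := le_and_eq_pow_of_mul_pow_eq (continuous_eval2_left (jacDet G.1 G.2) y) hK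
    fun x hx => hG.eval2_jacDet_mul_pow hdet hx y
  refine ⟨(hJ 0).1, fun x y => ?_⟩
  rw [(hJ y).2 x, Nat.sub_sub]

/-- if `det J_F = c ≠ 0` and `G` is the `R`-dual of `F`, then
necessarily `β ≥ α + 1` and `det J_G(x,y) = -c·α·x^{β-α-1}`. -/
theorem jacobian_of_dual (α β : ℕ) (hα : 1 ≤ α)
    (φ : Polynomial ℂ) (hφ : φ.natDegree < α + β)
    (F : PolyPair) (c : ℂ) (hc : c ≠ 0)
    (hdet : jacDet F.1 F.2 = MvPolynomial.C c)
    (G : PolyPair) (hG : IsRDual F G α β φ) :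
    α + 1 ≤ β ∧
      ∀ x y : ℂ, eval2 (jacDet G.1 G.2) x y = -c * (α : ℂ) * x ^ (β - α - 1) :=
  jacobian_of_dual_general α β hα φ F c hc hdet G hG
end
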